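/- Let $x_1,\dots,x_n$ be positive integers with $\sum x_i = (n/3) \cdot S$ and let $T$ be the tree consisting of a root path $p_1\cdots p_S$ together with, for each $i$, a pendant path of $x_i$ vertices attached at $p_S$. If the multiset $\{x_i\}$ can be partitioned into $n/3$ sets each summing to $S$, then $T$ admits a partition of its vertex set into blocks of size at most $S$ such that every root-to-leaf path intersects at most $2$ blocks. -/

import Mathlib

/-! Model of rooted trees, memory layouts into blocks, and the
worst-case root-to-leaf I/O cost `layoutCost t B k` (minimum over
layouts with at most `B` vertices per nonzero block and at most `k`
vertices in the free block `0`, of the maximum over root-to-leaf paths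
of the number of distinct nonzero blocks on the path).
Vertices are addressed by their list of child indices from the root. -/

inductive RTree : Type where
  | node : List RTree → RTree

namespace RTree

mutual
  /-- Addresses of all vertices of the tree. The root has address `[]`. -/
  def verts : RTree → List (List ℕ)
    | .node ts => [] :: vertsAux 0 ts
  def vertsAux : ℕ → List RTree → List (List ℕ)
    | _, [] => []
    | i, t :: ts => (t.verts.map (i :: ·)) ++ vertsAux (i + 1) ts
end

mutual
  /-- Addresses of all leaves; a root-to-leaf path consists of all
  prefixes (`List.inits`) of a leaf address. -/
  def paths : RTree → List (List ℕ)
    | .node [] => [[]]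
    | .node (t :: ts) => pathsAux 0 (t :: ts)
  def pathsAux : ℕ → List RTree → List (List ℕ)
    | _, [] => []
    | i, t :: ts => (t.paths.map (i :: ·)) ++ pathsAux (i + 1) ts
end

end RTree

/-- Number of vertices of `t` that layout `L` assigns to block `b`. -/
def blockCount (t : RTree) (L : List ℕ → ℕ) (b : ℕ) : ℕ :=
  (t.verts.filter (fun v => L v = b)).length

/-- `L` is a valid layout of `t` with block size `B` and at most `k`
vertices in the free block `0`. -/
def okLayout (t : RTree) (B k : ℕ) (L : List ℕ → ℕ) : Prop :=
  (∀ v ∈ t.verts, L v ≤ t.verts.length) ∧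
  (∀ b : ℕ, b ≠ 0 → blockCount t L b ≤ B) ∧
  blockCount t L 0 ≤ k

/-- Cost of the root-to-leaf path ending at leaf address `p`: the number
of distinct nonzero blocks among the vertices on the path. -/
def pathCost (L : List ℕ → ℕ) (p : List ℕ) : ℕ :=
  (((p.inits.map L).dedup).filter (fun b => b ≠ 0)).length

/-- Worst-case cost of layout `L` on tree `t`. -/
def maxCost (t : RTree) (L : List ℕ → ℕ) : ℕ :=
  (t.paths.map (pathCost L)).foldr max 0

/-- `c(T,k)`: worst-case optimal I/O cost of `t` with block size `B` and
`k` free slots in block `0`. -/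
noncomputable def layoutCost (t : RTree) (B k : ℕ) : ℕ :=
  sInf {m : ℕ | ∃ L : List ℕ → ℕ, okLayout t B k L ∧ maxCost t L = m}

/-- A path (chain) of `n+1` vertices whose bottom vertex has children `ts`. -/
def chain : ℕ → List RTree → RTree
  | 0, ts => .node ts
  | n + 1, ts => .node [chain n ts]

/-- The reduction tree: a root path `p₁ ⋯ p_S` of `S` vertices with, for
each `x ∈ xs`, a pendant path of `x` vertices attached at `p_S`. -/
def hardTree (S : ℕ) (xs : List ℕ) : RTree :=
  chain (S - 1) (xs.map fun x => chain (x - 1) [])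

/-! The root path `p₁ ⋯ p_S` forms block `0` and the pendant path of an element of `Y_j` goes
to block `j + 1`, which therefore holds `∑ Y_j = S` vertices; a root-to-leaf path meets block `0`
and the block of its own pendant path only. Since the layout reads the pendant index off the
address, the partition has to be transported to positions of `xs`: tag every element of `Y_j`
with `j`, and match the tagged list, a permutation of `xs` on first coordinates, with `xs`
position by position. -/

namespace RTree

theorem vertsAux_eq_flatMap : ∀ (i : ℕ) (ts : List RTree),
    vertsAux i ts = (ts.zipIdx i).flatMap fun p => p.1.verts.map (p.2 :: ·)
  | _, [] => by simp [vertsAux]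
  | i, t :: ts => by simp [vertsAux, vertsAux_eq_flatMap (i + 1) ts, List.zipIdx_cons]

end RTree

theorem verts_chain : ∀ (n : ℕ) (ts : List RTree), (chain n ts).verts =
    (List.range (n + 1)).map (List.replicate · 0) ++
      (RTree.vertsAux 0 ts).map (List.replicate n 0 ++ ·)
  | 0, ts => by simp [chain, RTree.verts, List.range_succ]
  | n + 1, ts => by
    simp only [chain, RTree.verts, RTree.vertsAux, List.append_nil, verts_chain n ts,
      List.map_append, List.map_map]
    simp [List.range_succ_eq_map, Function.comp_def, List.replicate_succ]

theorem length_verts_chain_nil (m : ℕ) : (chain m []).verts.length = m + 1 := by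
  simp [verts_chain, RTree.vertsAux]

theorem verts_hardTree {S : ℕ} (hS : 1 ≤ S) (xs : List ℕ) : (hardTree S xs).verts =
    (List.range S).map (List.replicate · 0) ++
      xs.zipIdx.flatMap fun p =>
        (chain (p.1 - 1) []).verts.map (List.replicate (S - 1) 0 ++ p.2 :: ·) := by
  rw [hardTree, verts_chain, Nat.sub_add_cancel hS, RTree.vertsAux_eq_flatMap, List.zipIdx_map]
  simp [List.map_flatMap, List.flatMap_map, Function.comp_def]

/-- A vertex at depth at least `S` lies on the pendant path whose child index at `p_S` is
entry `S - 1` of its address. -/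
def hardLayout (S : ℕ) (g : ℕ → ℕ) (v : List ℕ) : ℕ :=
  v[S - 1]?.elim 0 (g · + 1)

theorem hardLayout_replicate {S j : ℕ} (g : ℕ → ℕ) (h : j < S) :
    hardLayout S g (List.replicate j 0) = 0 := by
  simp [hardLayout, show ¬S - 1 < j by omega]

theorem hardLayout_pendant (S : ℕ) (g : ℕ → ℕ) (k : ℕ) (v : List ℕ) :
    hardLayout S g (List.replicate (S - 1) 0 ++ k :: v) = g k + 1 := by
  simp [hardLayout]

theorem blockCount_hardTree_hardLayout {S : ℕ} (hS : 1 ≤ S) {xs : List ℕ}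
    (hpos : ∀ x ∈ xs, 0 < x) (g : ℕ → ℕ) (b : ℕ) :
    blockCount (hardTree S xs) (hardLayout S g) b =
      (if b = 0 then S else 0) + (xs.zipIdx.map fun p => if g p.2 + 1 = b then p.1 else 0).sum := by
  rw [blockCount, ← List.countP_eq_length_filter, verts_hardTree hS, List.countP_append,
    List.countP_map, List.countP_flatMap]
  congr 1
  · rw [List.countP_congr fun j hj => by
      rw [Function.comp_apply, hardLayout_replicate g (List.mem_range.mp hj)]]
    by_cases hb : b = 0 <;> simp [hb, eq_comm]
  · congr 1
    refine List.map_congr_left fun p hp => ?_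
    have hp1 : 0 < p.1 := hpos p.1 (List.fst_mem_of_mem_zipIdx hp)
    simp only [Function.comp_apply, List.countP_map, Function.comp_def, hardLayout_pendant]
    split_ifs with hb
    · rw [List.countP_eq_length.mpr (by simp [hb]), length_verts_chain_nil]
      omega
    · exact List.countP_eq_zero.mpr (by simp [hb])

theorem hardLayout_of_isPrefix (S : ℕ) (g : ℕ → ℕ) {q p : List ℕ} (h : q <+: p) :
    hardLayout S g q = 0 ∨ hardLayout S g q = hardLayout S g p := by
  obtain ⟨r, rfl⟩ := h
  cases hq : q[S - 1]? with
  | none => simp [hardLayout, hq]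
  | some k => simp [hardLayout, List.getElem?_append_left (List.getElem?_eq_some_iff.mp hq).1, hq]

theorem length_dedup_inits_map_hardLayout_le (S : ℕ) (g : ℕ → ℕ) (p : List ℕ) :
    ((p.inits.map (hardLayout S g)).dedup).length ≤ 2 := by
  have hsub : (p.inits.map (hardLayout S g)).dedup ⊆ [0, hardLayout S g p] := by
    intro a ha
    obtain ⟨q, hq, rfl⟩ := List.mem_map.mp (List.mem_dedup.mp ha)
    rcases hardLayout_of_isPrefix S g ((List.mem_inits _ _).mp hq) with h | h <;> simp [h]
  exact ((List.nodup_dedup _).subperm hsub).length_le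

theorem exists_labelling_of_sum_le {S : ℕ} : ∀ Ys : List (List ℕ), (∀ Y ∈ Ys, Y.sum ≤ S) →
    ∃ T : List (ℕ × ℕ), T.map Prod.fst = Ys.flatten ∧
      ∀ j, (T.map fun p => if p.2 = j then p.1 else 0).sum ≤ S
  | [], _ => ⟨[], rfl, fun _ => by simp⟩
  | Y :: Ys, hY => by
    obtain ⟨T, hT, hload⟩ :=
      exists_labelling_of_sum_le Ys fun Z hZ => hY Z (List.mem_cons_of_mem _ hZ)
    refine ⟨Y.map (·, 0) ++ T.map (Prod.map id Nat.succ), by simp [hT, Function.comp_def], ?_⟩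
    rintro (_ | j)
    · simpa [Function.comp_def] using hY Y List.mem_cons_self
    · simpa [Function.comp_def] using hload j

theorem exists_zipIdx_relabel_perm {α β : Type*} [Nonempty β] :
    ∀ (xs : List α) (T : List (α × β)), (T.map Prod.fst).Perm xs → ∀ i : ℕ,
      ∃ g : ℕ → β, ((xs.zipIdx i).map fun p => (p.1, g p.2)).Perm T
  | [], T, h, _ => ⟨Classical.arbitrary _, by simpa using h⟩
  | x :: xs, T, h, i => by
    obtain ⟨⟨x, n⟩, hmem, rfl⟩ := List.mem_map.mp (h.symm.subset List.mem_cons_self)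
    obtain ⟨T₁, T₂, rfl⟩ := List.append_of_mem hmem
    have hT : ((T₁ ++ T₂).map Prod.fst).Perm xs :=
      ((List.perm_middle.map Prod.fst).symm.trans h).cons_inv
    obtain ⟨g, hg⟩ := exists_zipIdx_relabel_perm xs _ hT (i + 1)
    refine ⟨Function.update g i n, ?_⟩
    have hagree : ((xs.zipIdx (i + 1)).map fun p => (p.1, Function.update g i n p.2)) =
        (xs.zipIdx (i + 1)).map fun p => (p.1, g p.2) :=
      List.map_congr_left fun p hp => by
        rw [Function.update_of_ne (by have := List.le_snd_of_mem_zipIdx hp; omega)]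
    rw [List.zipIdx_cons, List.map_cons, hagree, Function.update_self]
    exact (hg.cons _).trans List.perm_middle.symm

/-- Forward direction of the 3-partition reduction: a valid 3-partition
of `xs` into sets of sum `S` yields a layout of the reduction tree into
blocks of size at most `S` in which every root-to-leaf path intersects
at most `2` blocks. -/
theorem stmt12 (S : ℕ) (hS : 1 ≤ S) (xs : List ℕ)
    (hpos : ∀ x ∈ xs, 0 < x)
    (hsum : xs.sum = (xs.length / 3) * S)
    (Ys : List (List ℕ)) (hlen : Ys.length = xs.length / 3)
    (hperm : Ys.flatten.Perm xs) (hYsum : ∀ Y ∈ Ys, Y.sum = S) :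
    ∃ L : List ℕ → ℕ,
      (∀ b : ℕ, blockCount (hardTree S xs) L b ≤ S) ∧
      ∀ p ∈ (hardTree S xs).paths, ((p.inits.map L).dedup).length ≤ 2 := by
  obtain ⟨T, hT, hload⟩ := exists_labelling_of_sum_le Ys fun Y hY => (hYsum Y hY).le
  obtain ⟨g, hg⟩ := exists_zipIdx_relabel_perm xs T (hT ▸ hperm) 0
  refine ⟨hardLayout S g, fun b => ?_, fun p _ => length_dedup_inits_map_hardLayout_le S g p⟩
  rw [blockCount_hardTree_hardLayout hS hpos]
  cases b with
  | zero => simp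
  | succ j =>
    have hload_eq := (hg.map fun p => if p.2 = j then p.1 else 0).sum_eq
    simp only [List.map_map, Function.comp_def] at hload_eq
    simpa [hload_eq] using hload j
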